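/- The Euclidean minimum spanning tree of a finite point set P in a metric space is a subgraph of the relative neighborhood graph of P, assuming all pairwise distances are distinct. -/

import Mathlib

/-!
Exchange argument: if `uv` is an edge of a minimum spanning tree `G` and `p` is any point, deleting
`uv` splits `G` into two components, one containing `u` and one containing `v`. If `p` lies on
`u`'s side, replacing `uv` by `pv` gives another spanning tree, so minimality forces
`dist u v ≤ dist p v`; symmetrically on `v`'s side. Hence
`dist u v ≤ max (dist u p) (dist v p)`, which is exactly the condition for `uv` to be an edge
of the relative neighborhood graph.
-/

open SimpleGraph

/-- Total weight of a graph in a finite metric space: sum of distances over edges. -/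
noncomputable def graphWeight {V : Type*} [Finite V] [MetricSpace V] (G : SimpleGraph V) : ℝ :=
  ∑ e ∈ G.edgeSet.toFinite.toFinset,
    Sym2.lift ⟨fun u v => dist u v, fun u v => dist_comm u v⟩ e

/-- `G` is a minimum spanning tree of the complete distance-weighted graph on `V`. -/
def IsMST {V : Type*} [Finite V] [MetricSpace V] (G : SimpleGraph V) : Prop :=
  G.IsTree ∧ ∀ T : SimpleGraph V, T.IsTree → graphWeight G ≤ graphWeight T

/-- All pairwise distances are distinct. -/
def DistinctDists (V : Type*) [MetricSpace V] : Prop :=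
  ∀ u v x y : V, u ≠ v → x ≠ y → dist u v = dist x y → s(u, v) = s(x, y)

/-- The relative neighborhood graph: `u ~ v` iff no third point `p` satisfies
`max (dist u p) (dist v p) < dist u v`. -/
def rng (V : Type*) [MetricSpace V] : SimpleGraph V where
  Adj u v := u ≠ v ∧ ¬ ∃ p : V, p ≠ u ∧ p ≠ v ∧ max (dist u p) (dist v p) < dist u v
  symm := by
    constructor
    rintro u v ⟨h1, h2⟩
    refine ⟨h1.symm, fun ⟨p, hpu, hpv, hp⟩ => h2 ⟨p, hpv, hpu, ?_⟩⟩
    rwa [dist_comm v u, max_comm] at hp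
  loopless := ⟨fun u h => h.1 rfl⟩

namespace SimpleGraph

variable {V : Type*} {G : SimpleGraph V} {u v p x y : V}

lemma Adj.deleteEdges_singleton (hxy : G.Adj x y) (hne : s(x, y) ≠ s(u, v)) :
    (G.deleteEdges {s(u, v)}).Adj x y :=
  (deleteEdges_adj ..).mpr ⟨hxy, hne⟩

lemma Walk.reachable_deleteEdges_or (w : G.Walk x u) :
    (G.deleteEdges {s(u, v)}).Reachable x u ∨ (G.deleteEdges {s(u, v)}).Reachable x v := by
  induction w with
  | nil => exact .inl .rfl
  | @cons x y u hxy w ih =>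
    by_cases hxy_uv : s(x, y) = s(u, v)
    · rcases Sym2.eq_iff.mp hxy_uv with ⟨rfl, -⟩ | ⟨rfl, -⟩
      · exact .inl .rfl
      · exact .inr .rfl
    · have hadj := hxy.deleteEdges_singleton hxy_uv
      exact ih.imp hadj.reachable.trans hadj.reachable.trans

lemma Preconnected.reachable_deleteEdges_or (hG : G.Preconnected) (u v x : V) :
    (G.deleteEdges {s(u, v)}).Reachable x u ∨ (G.deleteEdges {s(u, v)}).Reachable x v :=
  (hG x u).elim Walk.reachable_deleteEdges_or

lemma Preconnected.of_adj_reachable {H : SimpleGraph V} (hG : G.Preconnected)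
    (hGH : ∀ ⦃x y⦄, G.Adj x y → H.Reachable x y) : H.Preconnected := by
  intro x y
  have hxy := (reachable_iff_reflTransGen x y).mp (hG x y)
  refine (reachable_iff_reflTransGen x y).mpr (Relation.ReflTransGen.lift' id ?_ x y hxy)
  exact fun a b hab => (reachable_iff_reflTransGen a b).mp (hGH hab)

lemma IsAcyclic.not_reachable_deleteEdges (hG : G.IsAcyclic) (huv : G.Adj u v)
    (hpu : (G.deleteEdges {s(u, v)}).Reachable p u) : ¬(G.deleteEdges {s(u, v)}).Reachable p v :=
  fun hpv => isBridge_iff.mp (isAcyclic_iff_forall_adj_isBridge.mp hG huv) (hpu.symm.trans hpv)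

lemma IsTree.deleteEdges_sup_edge (hG : G.IsTree) (huv : G.Adj u v)
    (hpu : (G.deleteEdges {s(u, v)}).Reachable p u) :
    (G.deleteEdges {s(u, v)} ⊔ edge p v).IsTree := by
  have hpv := hG.isAcyclic.not_reachable_deleteEdges huv hpu
  have hpv_ne : p ≠ v := by rintro rfl; exact hpv .rfl
  have : Nonempty V := ⟨u⟩
  refine ⟨⟨hG.connected.preconnected.of_adj_reachable fun x y hxy => ?_⟩,
    (hG.isAcyclic.anti (deleteEdges_le _)).sup_edge_of_not_reachable hpv⟩
  by_cases hxy_uv : s(x, y) = s(u, v)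
  · have hreach : (G.deleteEdges {s(u, v)} ⊔ edge p v).Reachable u v :=
      (hpu.symm.mono le_sup_left).trans (Adj.reachable (by simp [edge_adj, hpv_ne]))
    rcases Sym2.eq_iff.mp hxy_uv with ⟨rfl, rfl⟩ | ⟨rfl, rfl⟩
    · exact hreach
    · exact hreach.symm
  · exact Adj.reachable (Or.inl (hxy.deleteEdges_singleton hxy_uv))

end SimpleGraph

section graphWeight

variable {V : Type*} [Finite V] [MetricSpace V] {G : SimpleGraph V} {u v p : V}

lemma graphWeight_sup_edge (huv : u ≠ v) (hnadj : ¬G.Adj u v) :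
    graphWeight (G ⊔ edge u v) = graphWeight G + dist u v := by
  classical
  have hedges : (G ⊔ edge u v).edgeSet.toFinite.toFinset =
      insert s(u, v) G.edgeSet.toFinite.toFinset := by
    ext e
    induction e with
    | h a b =>
      simp only [Set.Finite.mem_toFinset, Finset.mem_insert, mem_edgeSet, sup_adj, edge_adj,
        Sym2.eq_iff]
      grind
  unfold graphWeight
  rw [hedges, Finset.sum_insert (by simpa using hnadj), add_comm]
  rfl

lemma graphWeight_deleteEdges_singleton (huv : G.Adj u v) :
    graphWeight (G.deleteEdges {s(u, v)}) = graphWeight G - dist u v := by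
  classical
  have hedges : (G.deleteEdges {s(u, v)}).edgeSet.toFinite.toFinset =
      G.edgeSet.toFinite.toFinset.erase s(u, v) := by
    ext e
    simp [edgeSet_deleteEdges, and_comm]
  unfold graphWeight
  rw [hedges, Finset.sum_erase_eq_sub (by simpa using huv)]
  rfl

lemma IsMST.dist_le_of_reachable_deleteEdges (hG : IsMST G) (huv : G.Adj u v)
    (hpu : (G.deleteEdges {s(u, v)}).Reachable p u) : dist u v ≤ dist p v := by
  have hT := hG.1.deleteEdges_sup_edge huv hpu
  have hpv := hG.1.isAcyclic.not_reachable_deleteEdges huv hpu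
  have hpv_ne : p ≠ v := by rintro rfl; exact hpv .rfl
  have := hG.2 _ hT
  rw [graphWeight_sup_edge hpv_ne fun h => hpv h.reachable,
    graphWeight_deleteEdges_singleton huv] at this
  linarith

lemma IsMST.dist_le_max (hG : IsMST G) (huv : G.Adj u v) (p : V) :
    dist u v ≤ max (dist u p) (dist v p) := by
  rcases hG.1.connected.preconnected.reachable_deleteEdges_or u v p with hpu | hpv
  · calc dist u v ≤ dist p v := hG.dist_le_of_reachable_deleteEdges huv hpu
      _ ≤ _ := by rw [_root_.dist_comm]; exact le_max_right _ _
  · rw [Sym2.eq_swap] at hpv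
    calc dist u v = dist v u := dist_comm u v
      _ ≤ dist p u := hG.dist_le_of_reachable_deleteEdges huv.symm hpv
      _ ≤ _ := by rw [_root_.dist_comm]; exact le_max_left _ _

end graphWeight

theorem stmt1_general {V : Type*} [Finite V] [MetricSpace V]
    (G : SimpleGraph V) (hG : IsMST G) : G ≤ rng V :=
  fun _ _ huv => ⟨huv.ne, fun ⟨p, _, _, hp⟩ => (hG.dist_le_max huv p).not_gt hp⟩

/-- The minimum spanning tree of a finite point set `P` in a metric
space with distinct pairwise distances is a subgraph of the relative neighborhood
graph of `P`. -/
theorem stmt1 {V : Type*} [Finite V] [MetricSpace V] (h : DistinctDists V)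
    (G : SimpleGraph V) (hG : IsMST G) : G ≤ rng V :=
  stmt1_general G hG
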